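/- arXiv:0902.3623 — 10 statements merged into one kernel-verified Lean document; each statement's English description precedes it below -/
import Mathlib

section
/- If x₀ and x₁ are positive natural numbers and x₂, x₃ are natural numbers such that x₀² + x₁² = x₂², then x₀·x₁ ≠ 2·x₃². (Equivalently: the area of a right triangle with positive integer side lengths is never the square of an integer.) -/
/-!
From `x0 ^ 2 + x1 ^ 2 = x2 ^ 2` and `x0 * x1 = 2 * x3 ^ 2` one gets
`x2 ^ 4 - (2 * x3) ^ 4 = (x0 ^ 2 - x1 ^ 2) ^ 2`, and `x0 ≠ x1` because `√2` is irrational.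
So it suffices that `x ^ 4 - y ^ 4 = z ^ 2` has no solution with `y, z ≠ 0`, which is
Fermat's descent on `|x|`. Dividing by `gcd x y` we may assume `x, y` coprime, so that
`(y ^ 2, z, x ^ 2)` is a primitive Pythagorean triple `(m ^ 2 - n ^ 2, 2 m n, m ^ 2 + n ^ 2)`
(or with the legs swapped). If `y` is odd, `m ^ 4 - n ^ 4 = (x y) ^ 2` is a smaller solution.
If `y` is even, `(m, n, x)` is a primitive right triangle whose area `m n / 2` is a square; with
`m` even, `m / 2` and `n` are coprime, hence both squares, say `n = s ^ 2`. Parametrising this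
triangle as `(p ^ 2 - q ^ 2, 2 p q, p ^ 2 + q ^ 2)`, the coprime `p, q` have the square product
`m / 2`, so `p = e ^ 2`, `q = f ^ 2`, and `e ^ 4 - f ^ 4 = s ^ 2` is a smaller solution since
`e ^ 2 = p < |x|`.
-/

theorem Int.exists_sq_of_isCoprime_of_nonneg {a b c : ℤ} (hab : IsCoprime a b) (ha : 0 ≤ a)
    (h : a * b = c ^ 2) : ∃ d, a = d ^ 2 := by
  obtain ⟨d, had | had⟩ := Int.sq_of_isCoprime hab h
  · exact ⟨d, had⟩
  · exact ⟨d, by linarith [sq_nonneg d]⟩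

theorem Nat.eq_zero_of_sq_eq_two_mul_sq {a b : ℕ} (h : a ^ 2 = 2 * b ^ 2) : b = 0 := by
  by_contra hb
  have h2 : ((2 : ℕ) : ℚ) = ((a : ℚ) / b) ^ 2 := by
    rw [div_pow, eq_div_iff (by positivity)]
    exact_mod_cast h.symm
  exact Nat.prime_two.not_isSquare (Rat.isSquare_natCast_iff.mp ⟨_, h2.trans (sq _)⟩)

def QuarticDiffSq (x y z : ℤ) : Prop :=
  y ≠ 0 ∧ z ≠ 0 ∧ x ^ 4 = y ^ 4 + z ^ 2

theorem PythagoreanTriple.exists_quarticDiffSq_of_mul_eq_two_mul_sq {m n x w : ℤ}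
    (h : PythagoreanTriple m n x) (hmn : Int.gcd m n = 1) (hm : m % 2 = 0) (hn : n % 2 = 1)
    (hm0 : 0 < m) (hn0 : 0 < n) (hw : m * n = 2 * w ^ 2) :
    ∃ e f s, QuarticDiffSq e f s ∧ e.natAbs < x.natAbs := by
  obtain ⟨k, rfl⟩ := Int.dvd_of_emod_eq_zero hm
  have hkn : IsCoprime k n := (Int.isCoprime_iff_gcd_eq_one.mpr hmn).of_mul_left_right
  have hkw : k * n = w ^ 2 := mul_left_cancel₀ two_ne_zero (by linear_combination hw)
  obtain ⟨r, hr⟩ := Int.exists_sq_of_isCoprime_of_nonneg hkn (by omega) hkw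
  obtain ⟨s, hs⟩ := Int.exists_sq_of_isCoprime_of_nonneg hkn.symm hn0.le
    ((mul_comm n k).trans hkw)
  have hx : x ≠ 0 := by
    rintro rfl
    nlinarith [h.eq]
  have ht : PythagoreanTriple n (2 * k) x.natAbs := by
    unfold PythagoreanTriple
    rw [Int.natAbs_mul_self']
    linear_combination h.eq
  obtain ⟨p, q, hnpq, hkpq, hxpq, hpq, -, hp0⟩ := ht.coprime_classification'
    (by rwa [Int.gcd_comm]) hn (by positivity)
  have hpqr : p * q = r ^ 2 :=
    mul_left_cancel₀ two_ne_zero (by linear_combination -hkpq + 2 * hr)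
  have hq0 : 0 < q := pos_of_mul_pos_right (by rw [hpqr, ← hr]; omega) hp0
  have hpq' : IsCoprime p q := Int.isCoprime_iff_gcd_eq_one.mpr hpq
  obtain ⟨e, he⟩ := Int.exists_sq_of_isCoprime_of_nonneg hpq' hp0 hpqr
  obtain ⟨f, hf⟩ := Int.exists_sq_of_isCoprime_of_nonneg hpq'.symm hq0.le
    ((mul_comm q p).trans hpqr)
  refine ⟨e, f, s, ⟨?_, ?_, ?_⟩, ?_⟩
  · exact fun hf0 => hq0.ne' (by simp [hf, hf0])
  · exact fun hs0 => hn0.ne' (by simp [hs, hs0])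
  · linear_combination -hnpq + hs - (p + e ^ 2) * he + (q + f ^ 2) * hf
  · rw [Int.natAbs_lt_iff_sq_lt]
    calc e ^ 2 = p := he.symm
      _ ≤ p ^ 2 := Int.le_self_sq p
      _ < x.natAbs := by rw [hxpq]; linarith [pow_pos hq0 2]
      _ ≤ x ^ 2 := Int.natAbs_le_self_sq x

namespace QuarticDiffSq

variable {x y z : ℤ}

theorem ne_zero (h : QuarticDiffSq x y z) : x ≠ 0 := by
  obtain ⟨hy, -, h⟩ := h
  rintro rfl
  have : 0 < y ^ 4 + z ^ 2 := by positivity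
  linarith

theorem of_mul {k : ℤ} (hk : k ≠ 0) (h : QuarticDiffSq (k * x) (k * y) (k ^ 2 * z)) :
    QuarticDiffSq x y z := by
  obtain ⟨hy, hz, h⟩ := h
  refine ⟨right_ne_zero_of_mul hy, right_ne_zero_of_mul hz, ?_⟩
  exact mul_left_cancel₀ (pow_ne_zero 4 hk) (by linear_combination h)

theorem exists_natAbs_lt_of_gcd_ne_one (h : QuarticDiffSq x y z) (hg : Int.gcd x y ≠ 1) :
    ∃ x' y' z', QuarticDiffSq x' y' z' ∧ x'.natAbs < x.natAbs := by
  have hg0 : Int.gcd x y ≠ 0 := fun h0 => h.1 (Int.gcd_eq_zero_iff.mp h0).2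
  obtain ⟨g, hg1, ⟨x', rfl⟩, ⟨y', rfl⟩⟩ : ∃ g : ℕ, 1 < g ∧ (g : ℤ) ∣ x ∧ (g : ℤ) ∣ y :=
    ⟨_, by omega, Int.gcd_dvd_left x y, Int.gcd_dvd_right x y⟩
  obtain ⟨z', rfl⟩ : (g : ℤ) ^ 2 ∣ z := by
    rw [← Int.pow_dvd_pow_iff two_ne_zero, ← pow_mul]
    exact ⟨x' ^ 4 - y' ^ 4, by linear_combination -h.2.2⟩
  have h' := h.of_mul (by positivity)
  refine ⟨x', y', z', h', ?_⟩
  rw [Int.natAbs_mul, Int.natAbs_natCast]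
  exact lt_mul_left (Int.natAbs_pos.mpr h'.ne_zero) hg1

theorem gcd_sq_eq_one_of_gcd_eq_one (h : QuarticDiffSq x y z) (hxy : Int.gcd x y = 1) :
    Int.gcd (y ^ 2) z = 1 := by
  rw [← Int.isCoprime_iff_gcd_eq_one] at hxy ⊢
  have hz : z ^ 2 = x ^ 4 + y ^ 2 * -y ^ 2 := by linear_combination -h.2.2
  have hyz : IsCoprime (y ^ 2) (z ^ 2) := hz ▸ (hxy.symm.pow (m := 2)).add_mul_left_right _
  exact IsCoprime.pow_right_iff two_pos |>.mp hyz

theorem pythagoreanTriple (h : QuarticDiffSq x y z) : PythagoreanTriple (y ^ 2) z (x ^ 2) := by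
  unfold PythagoreanTriple
  linear_combination -h.2.2

theorem exists_natAbs_lt_of_y_sq_odd (h : QuarticDiffSq x y z) (hyz : Int.gcd (y ^ 2) z = 1)
    (hy : y ^ 2 % 2 = 1) : ∃ x' y' z', QuarticDiffSq x' y' z' ∧ x'.natAbs < x.natAbs := by
  obtain ⟨m, n, hy2, hz, hx2, -⟩ :=
    h.pythagoreanTriple.coprime_classification' hyz hy (by positivity [h.ne_zero])
  have hn : n ≠ 0 := by rintro rfl; exact h.2.1 (by simpa using hz)
  refine ⟨m, n, x * y, ⟨hn, mul_ne_zero h.ne_zero h.1, ?_⟩, ?_⟩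
  · linear_combination -(m ^ 2 + n ^ 2) * hy2 - y ^ 2 * hx2
  · rw [Int.natAbs_lt_iff_sq_lt, hx2]
    have : 0 < n ^ 2 := by positivity
    linarith

theorem exists_natAbs_lt_of_z_odd (h : QuarticDiffSq x y z) (hyz : Int.gcd (y ^ 2) z = 1)
    (hz : z % 2 = 1) : ∃ x' y' z', QuarticDiffSq x' y' z' ∧ x'.natAbs < x.natAbs := by
  obtain ⟨m, n, -, hy2, hx2, hmn, hpar, hm0⟩ :=
    h.pythagoreanTriple.symm.coprime_classification' (by rwa [Int.gcd_comm]) hz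
      (by positivity [h.ne_zero])
  obtain ⟨w, rfl⟩ : 2 ∣ y :=
    Int.prime_two.dvd_of_dvd_pow (n := 2) ⟨m * n, by linear_combination hy2⟩
  have hw : m * n = 2 * w ^ 2 := mul_left_cancel₀ two_ne_zero (by linear_combination -hy2)
  have hmn0 : 0 < m * n := by
    have : w ≠ 0 := by rintro rfl; exact h.1 (mul_zero 2)
    rw [hw]; positivity
  have hm : 0 < m := lt_of_le_of_ne hm0 (by rintro rfl; simp at hmn0)
  have hn : 0 < n := pos_of_mul_pos_right hmn0 hm0
  have ht : PythagoreanTriple m n x := by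
    unfold PythagoreanTriple
    linear_combination -hx2
  rcases hpar with ⟨hme, hno⟩ | ⟨hmo, hne⟩
  · exact ht.exists_quarticDiffSq_of_mul_eq_two_mul_sq hmn hme hno hm hn hw
  · exact ht.symm.exists_quarticDiffSq_of_mul_eq_two_mul_sq (by rwa [Int.gcd_comm]) hne hmo
      hn hm ((mul_comm n m).trans hw)

theorem exists_natAbs_lt (h : QuarticDiffSq x y z) :
    ∃ x' y' z', QuarticDiffSq x' y' z' ∧ x'.natAbs < x.natAbs := by
  by_cases hxy : Int.gcd x y = 1
  · have hyz := h.gcd_sq_eq_one_of_gcd_eq_one hxy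
    rcases h.pythagoreanTriple.even_odd_of_coprime hyz with ⟨-, hz⟩ | ⟨hy, -⟩
    · exact h.exists_natAbs_lt_of_z_odd hyz hz
    · exact h.exists_natAbs_lt_of_y_sq_odd hyz hy
  · exact h.exists_natAbs_lt_of_gcd_ne_one hxy

end QuarticDiffSq

theorem not_quarticDiffSq (x y z : ℤ) : ¬QuarticDiffSq x y z := fun h =>
  let ⟨x', y', z', h', _⟩ := h.exists_natAbs_lt
  not_quarticDiffSq x' y' z' h'
termination_by x.natAbs

theorem fermat_right_triangle_area_not_square
    (x0 x1 x2 x3 : ℕ) (hx0 : 0 < x0) (hx1 : 0 < x1)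
    (h : x0 ^ 2 + x1 ^ 2 = x2 ^ 2) :
    x0 * x1 ≠ 2 * x3 ^ 2 := by
  intro harea
  have hx3 : x3 ≠ 0 := by
    rintro rfl
    exact (Nat.mul_pos hx0 hx1).ne' (by simpa using harea)
  have hsq : x0 ^ 2 ≠ x1 ^ 2 := by
    intro heq
    obtain rfl := Nat.pow_left_injective two_ne_zero heq
    exact hx3 (Nat.eq_zero_of_sq_eq_two_mul_sq ((sq x0).trans harea))
  apply not_quarticDiffSq x2 (2 * x3) (x0 ^ 2 - x1 ^ 2)
  refine ⟨by positivity, sub_ne_zero.mpr (by exact_mod_cast hsq), ?_⟩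
  have hZ : (x0 : ℤ) ^ 2 + x1 ^ 2 = x2 ^ 2 := by exact_mod_cast h
  have hareaZ : (x0 : ℤ) * x1 = 2 * x3 ^ 2 := by exact_mod_cast harea
  linear_combination
    -((x2 : ℤ) ^ 2 + x0 ^ 2 + x1 ^ 2) * hZ + (4 * (x0 : ℤ) * x1 + 8 * x3 ^ 2) * hareaZ
end

section
/- If x₀, …, x_{n+1} and y₀, …, y_{n+1} are two sequences of natural numbers in continued proportion, if x₀·y₁ = y₀·x₁, and if x₀ and x_{n+1} are coprime, then there is a positive natural number k such that k·xᵢ = yᵢ for every i ∈ {0, …, n+1}. -/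
/-! Two sequences in continued proportion with the same first ratio have the same ratio
throughout: `x₀ yᵢ = y₀ xᵢ` propagates from `i, i + 1` to `i + 2`. Taking `i = n + 1`, the
coprime `x₀` divides `y₀ x_{n+1}`, hence `y₀ = k x₀`, and then `yᵢ = k xᵢ` for all `i`. -/

section CrossMul

variable {M : Type*} [CommMonoidWithZero M] [IsCancelMulZero M]

theorem cross_mul_step {a b x₀ x₁ x₂ y₀ y₁ y₂ : M} (ha : a ≠ 0) (hy₀ : y₀ ≠ 0)
    (hx : x₀ * x₂ = x₁ ^ 2) (hy : y₀ * y₂ = y₁ ^ 2)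
    (h₀ : a * y₀ = b * x₀) (h₁ : a * y₁ = b * x₁) : a * y₂ = b * x₂ := by
  refine mul_right_cancel₀ (mul_ne_zero ha hy₀) ?_
  calc a * y₂ * (a * y₀) = (a * y₁) ^ 2 := by rw [mul_pow, ← hy, sq]; ac_rfl
    _ = (b * x₁) ^ 2 := by rw [h₁]
    _ = b * x₂ * (b * x₀) := by rw [mul_pow, ← hx, sq]; ac_rfl
    _ = b * x₂ * (a * y₀) := by rw [h₀]

theorem cross_mul_eq_of_continued_proportion {n : ℕ} {x y : ℕ → M} (hx₀ : x 0 ≠ 0)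
    (hy : ∀ i < n, y i ≠ 0)
    (hxprop : ∀ i < n, x i * x (i + 2) = x (i + 1) ^ 2)
    (hyprop : ∀ i < n, y i * y (i + 2) = y (i + 1) ^ 2)
    (h : x 0 * y 1 = y 0 * x 1) : ∀ i ≤ n + 1, x 0 * y i = y 0 * x i := by
  suffices ∀ i ≤ n, x 0 * y i = y 0 * x i ∧ x 0 * y (i + 1) = y 0 * x (i + 1) by
    intro i hi
    cases i with
    | zero => exact mul_comm _ _
    | succ j => exact (this j (by omega)).2
  intro i hi
  induction i with
  | zero => exact ⟨mul_comm _ _, h⟩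
  | succ i ih =>
    obtain ⟨h₀, h₁⟩ := ih (by omega)
    exact ⟨h₁, cross_mul_step hx₀ (hy i (by omega)) (hxprop i (by omega))
      (hyprop i (by omega)) h₀ h₁⟩

end CrossMul

theorem euclid_VIII_1
    (n : ℕ) (x y : ℕ → ℕ)
    (hxpos : ∀ i ≤ n + 1, 0 < x i)
    (hxprop : ∀ i, 1 ≤ i → i ≤ n → x (i - 1) * x (i + 1) = x i ^ 2)
    (hypos : ∀ i ≤ n + 1, 0 < y i)
    (hyprop : ∀ i, 1 ≤ i → i ≤ n → y (i - 1) * y (i + 1) = y i ^ 2)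
    (h : x 0 * y 1 = y 0 * x 1)
    (hcop : ∀ d : ℕ, d ∣ x 0 → d ∣ x (n + 1) → d = 1) :
    ∃ k : ℕ, 0 < k ∧ ∀ i ≤ n + 1, k * x i = y i := by
  have hx₀ : 0 < x 0 := hxpos 0 (by omega)
  have cross := cross_mul_eq_of_continued_proportion (n := n) hx₀.ne'
    (fun i hi => (hypos i (by omega)).ne')
    (fun i hi => by simpa using hxprop (i + 1) (by omega) (by omega))
    (fun i hi => by simpa using hyprop (i + 1) (by omega) (by omega)) h
  have hcop' : Nat.Coprime (x 0) (x (n + 1)) :=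
    hcop _ (Nat.gcd_dvd_left _ _) (Nat.gcd_dvd_right _ _)
  obtain ⟨k, hk⟩ : x 0 ∣ y 0 :=
    hcop'.dvd_of_dvd_mul_right ⟨y (n + 1), (cross (n + 1) le_rfl).symm⟩
  have hk_pos : 0 < k := Nat.pos_of_mul_pos_left (hk ▸ hypos 0 (by omega))
  refine ⟨k, hk_pos, fun i hi => Nat.eq_of_mul_eq_mul_left hx₀ ?_⟩
  rw [cross i hi, hk, mul_assoc]
end

section
/- If x₀, …, x_{n+1} are natural numbers in continued proportion, then there exist a positive natural number k and coprime positive natural numbers y, z such that the numbers y^{n+1}·z⁰, …, y^{n+1−i}·zⁱ, …, y⁰·z^{n+1} are in continued proportion, x₀·(yⁿ·z) = y^{n+1}·x₁, and k·y^{n+1−i}·zⁱ = xᵢ for every i ∈ {0, …, n+1}; moreover, if x₀ and x_{n+1} are coprime, then k = 1. -/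
/-!
Put `g = gcd(x₀, x₁)`, `x₀ = g y`, `x₁ = g z` with `y, z` coprime. Cancelling the nonzero middle
terms, continued proportion propagates the ratio `x₁ : x₀ = z : y` to every pair of neighbours,
so `xᵢ yⁱ = x₀ zⁱ`. For `i = n + 1` coprimality of `yⁿ⁺¹` and `zⁿ⁺¹` gives `yⁿ⁺¹ ∣ x₀`, and
`k = x₀ / yⁿ⁺¹` yields `xᵢ = k yⁿ⁺¹⁻ⁱ zⁱ`; so `k` divides both `x₀` and `xₙ₊₁`.
-/

section Proportion

variable {M : Type*}

theorem succ_mul_eq_mul_of_mul_eq_sq [CommMonoidWithZero M] [IsLeftCancelMulZero M]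
    {n : ℕ} {x : ℕ → M} {y z : M}
    (hpos : ∀ i, 1 ≤ i → i ≤ n → x i ≠ 0)
    (hprop : ∀ i, 1 ≤ i → i ≤ n → x (i - 1) * x (i + 1) = x i ^ 2)
    (h₁ : x 1 * y = x 0 * z) : ∀ i ≤ n, x (i + 1) * y = x i * z := by
  intro i hi
  induction i with
  | zero => exact h₁
  | succ j ih =>
    have hsq := hprop (j + 1) (by omega) (by omega)
    rw [Nat.add_sub_cancel] at hsq
    apply mul_left_cancel₀ (hpos (j + 1) (by omega) hi)
    calc x (j + 1) * (x (j + 1 + 1) * y) = x (j + 1 + 1) * (x (j + 1) * y) := by ac_rfl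
      _ = x (j + 1 + 1) * (x j * z) := by rw [ih (by omega)]
      _ = x (j + 1) * (x (j + 1) * z) := by
        rw [← mul_assoc (x (j + 1)), ← sq, ← hsq]; ac_rfl

theorem mul_pow_eq_mul_pow_of_succ_mul_eq [CommMonoid M] {m : ℕ} {x : ℕ → M} {y z : M}
    (h : ∀ i < m, x (i + 1) * y = x i * z) : ∀ i ≤ m, x i * y ^ i = x 0 * z ^ i := by
  intro i hi
  induction i with
  | zero => simp
  | succ j ih =>
    calc x (j + 1) * y ^ (j + 1) = x (j + 1) * y * y ^ j := by rw [pow_succ', mul_assoc]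
      _ = x j * y ^ j * z := by rw [h j (by omega)]; ac_rfl
      _ = x 0 * z ^ (j + 1) := by rw [ih (by omega), pow_succ, mul_assoc]

theorem pow_sub_mul_pow_mul_pow_sub_mul_pow [CommMonoid M] (y z : M) {m i : ℕ}
    (hi₁ : 1 ≤ i) (hi₂ : i < m) :
    (y ^ (m - (i - 1)) * z ^ (i - 1)) * (y ^ (m - (i + 1)) * z ^ (i + 1))
      = (y ^ (m - i) * z ^ i) ^ 2 := by
  obtain ⟨c, rfl⟩ : ∃ c, i = c + 1 := ⟨i - 1, by omega⟩
  obtain ⟨d, rfl⟩ : ∃ d, m = c + 2 + d := ⟨m - (c + 2), by omega⟩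
  rw [show c + 2 + d - (c + 1 - 1) = d + 2 by omega, show c + 2 + d - (c + 1) = d + 1 by omega,
    show c + 2 + d - (c + 1 + 1) = d by omega, Nat.add_sub_cancel]
  simp only [pow_succ, pow_zero, one_mul]
  ac_rfl

theorem mul_pow_sub_mul_pow_eq_of_mul_pow_eq [CommMonoidWithZero M] [IsLeftCancelMulZero M]
    {m i : ℕ} {k y z a b : M} (hy : y ≠ 0) (hk : k * y ^ m = b) (h : a * y ^ i = b * z ^ i)
    (hi : i ≤ m) :
    k * (y ^ (m - i) * z ^ i) = a := by
  apply mul_left_cancel₀ (pow_ne_zero i hy)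
  calc y ^ i * (k * (y ^ (m - i) * z ^ i)) = k * (y ^ (m - i) * y ^ i) * z ^ i := by ac_rfl
    _ = y ^ i * a := by rw [← pow_add, Nat.sub_add_cancel hi, hk, ← h, mul_comm]

end Proportion

theorem euclid_VIII_2
    (n : ℕ) (x : ℕ → ℕ)
    (hxpos : ∀ i ≤ n + 1, 0 < x i)
    (hxprop : ∀ i, 1 ≤ i → i ≤ n → x (i - 1) * x (i + 1) = x i ^ 2) :
    ∃ k y z : ℕ, 0 < k ∧ 0 < y ∧ 0 < z ∧
      (∀ d : ℕ, d ∣ y → d ∣ z → d = 1) ∧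
      (∀ i ≤ n + 1, 0 < y ^ (n + 1 - i) * z ^ i) ∧
      (∀ i, 1 ≤ i → i ≤ n →
        (y ^ (n + 1 - (i - 1)) * z ^ (i - 1)) * (y ^ (n + 1 - (i + 1)) * z ^ (i + 1))
          = (y ^ (n + 1 - i) * z ^ i) ^ 2) ∧
      x 0 * (y ^ n * z) = y ^ (n + 1) * x 1 ∧
      (∀ i ≤ n + 1, k * (y ^ (n + 1 - i) * z ^ i) = x i) ∧
      ((∀ d : ℕ, d ∣ x 0 → d ∣ x (n + 1) → d = 1) → k = 1) := by
  have hx₀ := hxpos 0 (by omega)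
  have hx₁ := hxpos 1 (by omega)
  obtain ⟨g, y, z, -, hyz, hgy, hgz⟩ := Nat.exists_coprime' (Nat.gcd_pos_of_pos_left (x 1) hx₀)
  have hy : 0 < y := Nat.pos_of_mul_pos_right (hgy ▸ hx₀)
  have hz : 0 < z := Nat.pos_of_mul_pos_right (hgz ▸ hx₁)
  have h₁ : x 1 * y = x 0 * z := by rw [hgy, hgz]; ring
  have hratio := succ_mul_eq_mul_of_mul_eq_sq (fun i _ hi => (hxpos i (by omega)).ne') hxprop h₁
  have hpow := mul_pow_eq_mul_pow_of_succ_mul_eq (m := n + 1) (fun i hi => hratio i (by omega))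
  obtain ⟨k, hk⟩ : y ^ (n + 1) ∣ x 0 :=
    (hyz.pow _ _).dvd_of_dvd_mul_right ⟨x (n + 1), by rw [← hpow _ le_rfl, mul_comm]⟩
  have hk₀ : 0 < k := Nat.pos_of_mul_pos_left (hk ▸ hx₀)
  have hformula (i) (hi : i ≤ n + 1) : k * (y ^ (n + 1 - i) * z ^ i) = x i :=
    mul_pow_sub_mul_pow_eq_of_mul_pow_eq hy.ne' (by rw [hk, mul_comm]) (hpow i hi) hi
  refine ⟨k, y, z, hk₀, hy, hz, fun _ => Nat.eq_one_of_dvd_coprimes hyz,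
    fun i _ => by positivity,
    fun i hi₁ hi₂ => pow_sub_mul_pow_mul_pow_sub_mul_pow y z hi₁ (by omega),
    by rw [pow_succ, mul_assoc, mul_comm y, h₁]; ring, hformula, fun hcop => hcop k ?_ ?_⟩
  · exact ⟨y ^ (n + 1), by rw [hk, mul_comm]⟩
  · exact ⟨_, (hformula (n + 1) le_rfl).symm⟩
end

section
/- If p, q, x are natural numbers with p ≥ q and x ∣ 2·p·q, then x ∣ p² − q² if and only if x ∣ p² + q². -/
theorem dvd_sq_sub_iff_dvd_sq_add
    (p q x : ℕ) (hpq : q ≤ p) (h : x ∣ 2 * p * q) :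
    x ∣ p ^ 2 - q ^ 2 ↔ x ∣ p ^ 2 + q ^ 2 := by
  have hq2 : q ^ 2 ≤ p ^ 2 := Nat.pow_le_pow_left hpq 2
  have hc := Nat.sub_add_cancel hq2
  have key : (p ^ 2 + q ^ 2) ^ 2 = (p ^ 2 - q ^ 2) ^ 2 + (2 * p * q) ^ 2 := by
    nlinarith [hc]
  constructor
  · intro hd
    have hx : x ^ 2 ∣ (p ^ 2 + q ^ 2) ^ 2 := by
      rw [key]
      exact dvd_add (pow_dvd_pow_of_dvd hd 2) (pow_dvd_pow_of_dvd h 2)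
    exact (Nat.pow_dvd_pow_iff two_ne_zero).mp hx
  · intro hd
    have hx : x ^ 2 ∣ (p ^ 2 - q ^ 2) ^ 2 := by
      have h2 : (p ^ 2 - q ^ 2) ^ 2 = (p ^ 2 + q ^ 2) ^ 2 - (2 * p * q) ^ 2 := by
        omega
      rw [h2]
      exact Nat.dvd_sub (pow_dvd_pow_of_dvd hd 2) (pow_dvd_pow_of_dvd h 2)
    exact (Nat.pow_dvd_pow_iff two_ne_zero).mp hx
end

section
/- For natural numbers x₀, x₁, x₂ one has x₀² + x₁² = x₂² if and only if for some i ∈ {0,1} there exist natural numbers a, b, c such that a ≥ b, a·b = c², x_i = 2·c, x_{1−i} = a − b, and x₂ = a + b. -/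
/-!
Of the two legs of a Pythagorean triple at least one is even, since a sum of two odd squares is
`2 mod 4` and no square is. If the even leg is `2 * c` and the other is `v`, then the hypotenuse,
having the parity of `v`, is `w = v + 2 * d` for some `d`, and `(2 * c) ^ 2 + v ^ 2 = (v + 2 * d) ^ 2`
says exactly that `c ^ 2 = (v + d) * d`; so `a = v + d`, `b = d` work. The converse is the identity
`(2 * c) ^ 2 + (a - b) ^ 2 = (a + b) ^ 2` for `a * b = c ^ 2`.
-/

lemma Nat.sq_mod_four_eq_one_of_odd {n : ℕ} (hn : Odd n) : n ^ 2 % 4 = 1 := by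
  obtain ⟨k, rfl⟩ := hn
  have : (2 * k + 1) ^ 2 = 4 * (k ^ 2 + k) + 1 := by ring
  omega

lemma even_or_even_of_sq_add_sq_eq_sq {u v w : ℕ} (h : u ^ 2 + v ^ 2 = w ^ 2) :
    Even u ∨ Even v := by
  by_contra! hodd
  simp only [Nat.not_even_iff_odd] at hodd
  have hu := Nat.sq_mod_four_eq_one_of_odd hodd.1
  have hv := Nat.sq_mod_four_eq_one_of_odd hodd.2
  rcases Nat.even_or_odd w with ⟨k, rfl⟩ | hw
  · have : (k + k) ^ 2 = 4 * k ^ 2 := by ring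
    omega
  · have := Nat.sq_mod_four_eq_one_of_odd hw
    omega

lemma exists_mul_eq_sq_of_two_mul_sq_add_sq_eq_sq {c v w : ℕ}
    (h : (2 * c) ^ 2 + v ^ 2 = w ^ 2) :
    ∃ a b, b ≤ a ∧ a * b = c ^ 2 ∧ v = a - b ∧ w = a + b := by
  have hvw : v ≤ w := by nlinarith
  have hparity : Even v ↔ Even w := by
    have := congrArg Even h
    simpa [Nat.even_add, Nat.even_pow, parity_simps] using this
  obtain ⟨d, hd⟩ := (Nat.even_sub hvw).2 hparity.symm
  obtain rfl : w = v + 2 * d := by omega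
  refine ⟨v + d, d, by omega, ?_, by omega, by omega⟩
  nlinarith

lemma two_mul_sq_add_sq_eq_sq_of_mul_eq_sq {a b c : ℕ} (hba : b ≤ a) (h : a * b = c ^ 2) :
    (2 * c) ^ 2 + (a - b) ^ 2 = (a + b) ^ 2 := by
  obtain ⟨d, rfl⟩ := Nat.exists_eq_add_of_le hba
  rw [Nat.add_sub_cancel_left]
  nlinarith

theorem pythagorean_roots
    (x : Fin 2 → ℕ) (x2 : ℕ) :
    x 0 ^ 2 + x 1 ^ 2 = x2 ^ 2 ↔
      ∃ (i : Fin 2) (a b c : ℕ), b ≤ a ∧ a * b = c ^ 2 ∧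
        x i = 2 * c ∧ x (1 - i) = a - b ∧ x2 = a + b := by
  constructor
  · intro h
    rcases even_or_even_of_sq_add_sq_eq_sq h with h0 | h1
    · obtain ⟨c, hc⟩ := h0.two_dvd
      obtain ⟨a, b, hba, habc, hv, hw⟩ :=
        exists_mul_eq_sq_of_two_mul_sq_add_sq_eq_sq (c := c) (v := x 1) (w := x2) (hc ▸ h)
      exact ⟨0, a, b, c, hba, habc, hc, hv, hw⟩
    · obtain ⟨c, hc⟩ := h1.two_dvd
      obtain ⟨a, b, hba, habc, hv, hw⟩ :=
        exists_mul_eq_sq_of_two_mul_sq_add_sq_eq_sq (c := c) (v := x 0) (w := x2)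
          (hc ▸ add_comm (x 0 ^ 2) _ ▸ h)
      exact ⟨1, a, b, c, hba, habc, hc, hv, hw⟩
  · rintro ⟨i, a, b, c, hba, habc, hi, hi', rfl⟩
    have htriple := two_mul_sq_add_sq_eq_sq_of_mul_eq_sq hba habc
    fin_cases i
    · simp only [Fin.zero_eta, Fin.isValue, sub_zero] at hi hi'
      rw [hi, hi', htriple]
    · simp only [Fin.mk_one, Fin.isValue, sub_self] at hi hi'
      rw [hi, hi', add_comm, htriple]
end

section
/- Let x₀, x₁, x₂ be natural numbers with x₀² + x₁² = x₂² and x₀, x₁, x₂ coprime. Then exactly one of x₀, x₁ is even; call it x_i. If moreover x_i = v² for some natural number v, then there exist a natural number m and a positive natural number k such that 2·m and k are coprime, m = 0 holds if and only if x_i = 0, and (2·m²)² + (k²)² = x₂. -/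
private lemma nat_sq_of_coprime {a b c : ℕ} (h : Nat.Coprime a b) (heq : a * b = c ^ 2) :
    ∃ a0 : ℕ, a = a0 ^ 2 := by
  obtain ⟨a0, h1 | h1⟩ := Int.sq_of_isCoprime (Nat.isCoprime_iff_coprime.mpr h)
    (show (a : ℤ) * b = (c : ℤ) ^ 2 by exact_mod_cast heq)
  · refine ⟨a0.natAbs, ?_⟩
    have h2 : ((a0.natAbs ^ 2 : ℕ) : ℤ) = (a : ℤ) := by
      push_cast
      rw [sq_abs, ← h1]
    exact_mod_cast h2.symm
  · have h2 : (a : ℤ) ≤ 0 := h1 ▸ neg_nonpos.mpr (sq_nonneg _)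
    have h3 : a = 0 := by exact_mod_cast le_antisymm h2 (by positivity)
    exact ⟨0, by simp [h3]⟩

private lemma key2 {M N v : ℕ} (hM : 0 < M) (hN : 0 < N) (hcop : Nat.Coprime M N)
    (hModd : ¬ Even M) (hv : 2 * M * N = v ^ 2) :
    ∃ m k : ℕ, 0 < k ∧ (∀ d : ℕ, d ∣ 2 * m → d ∣ k → d = 1) ∧ m ≠ 0 ∧
      (2 * m ^ 2) ^ 2 + (k ^ 2) ^ 2 = M ^ 2 + N ^ 2 := by
  have hM2 : M % 2 = 1 := by
    rcases Nat.even_or_odd M with h | h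
    · exact absurd h hModd
    · exact Nat.odd_iff.mp h
  have hv2 : Even (v ^ 2) := ⟨M * N, by rw [← hv]; ring⟩
  obtain ⟨w, hw⟩ := (Nat.even_pow.mp hv2).1
  have hNeven : Even N := by
    by_contra hNo
    have hN2 : N % 2 = 1 := by
      rcases Nat.even_or_odd N with h | h
      · exact absurd h hNo
      · exact Nat.odd_iff.mp h
    have h4 : 2 * (M * N) = 2 * (2 * (w * w)) := by
      calc 2 * (M * N) = 2 * M * N := by ring
        _ = v ^ 2 := hv
        _ = 2 * (2 * (w * w)) := by rw [hw]; ring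
    have h5 : M * N = 2 * (w * w) := Nat.eq_of_mul_eq_mul_left (by norm_num) h4
    have h6 : Even (M * N) := ⟨w * w, by rw [h5]; ring⟩
    have h7 : Odd (M * N) := Nat.odd_mul.mpr ⟨Nat.odd_iff.mpr hM2, Nat.odd_iff.mpr hN2⟩
    rw [Nat.even_iff] at h6
    rw [Nat.odd_iff] at h7
    omega
  obtain ⟨N', hN'⟩ := hNeven
  have hN'' : N = 2 * N' := by omega
  have hN'pos : 0 < N' := by omega
  have h4 : 4 * (M * N') = 4 * (w ^ 2) := by
    calc 4 * (M * N') = 2 * M * N := by rw [hN'']; ring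
      _ = v ^ 2 := hv
      _ = 4 * (w ^ 2) := by rw [hw]; ring
  have hw2 : M * N' = w ^ 2 := Nat.eq_of_mul_eq_mul_left (by norm_num) h4
  have hcop' : Nat.Coprime M N' := Nat.Coprime.coprime_dvd_right ⟨2, by omega⟩ hcop
  obtain ⟨k, hk⟩ := nat_sq_of_coprime hcop' hw2
  obtain ⟨m, hm⟩ := nat_sq_of_coprime (Nat.coprime_comm.mp hcop') (by rw [mul_comm]; exact hw2)
  have hkpos : 0 < k := by
    rcases Nat.eq_zero_or_pos k with h0 | h0
    · subst h0; simp at hk; omega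
    · exact h0
  have hmpos : 0 < m := by
    rcases Nat.eq_zero_or_pos m with h0 | h0
    · subst h0; simp at hm; omega
    · exact h0
  have hkodd : Odd k := by
    rcases Nat.even_or_odd k with hke | hko
    · exact absurd (by rw [hk, Nat.even_pow]; exact ⟨hke, by norm_num⟩) hModd
    · exact hko
  have hkM : k ∣ M := by rw [hk]; exact dvd_pow_self k two_ne_zero
  have hmN : m ∣ N := dvd_trans (by rw [hm]; exact dvd_pow_self m two_ne_zero)
    (⟨2, by omega⟩ : N' ∣ N)
  have hmk : Nat.Coprime m k :=
    Nat.Coprime.coprime_dvd_left hmN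
      (Nat.Coprime.coprime_dvd_right hkM (Nat.coprime_comm.mp hcop))
  refine ⟨m, k, hkpos, ?_, by omega, ?_⟩
  · intro d hd2m hdk
    have hd2 : Nat.Coprime 2 d := by
      rw [Nat.coprime_two_left]
      rcases Nat.even_or_odd d with hde | hdo
      · exfalso
        obtain ⟨e, he⟩ := hde
        obtain ⟨f, hf⟩ := hdk
        obtain ⟨g, hg⟩ := hkodd
        have hke : k = 2 * (e * f) := by rw [hf, he]; ring
        omega
      · exact hdo
    have hdm : d ∣ m := hd2.symm.dvd_of_dvd_mul_left hd2m
    exact Nat.eq_one_of_dvd_one (hmk.gcd_eq_one ▸ Nat.dvd_gcd hdm hdk)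
  · have h2 : (2 * m ^ 2) = N := by rw [hN'', hm]
    rw [h2, hk]
    ring

private lemma key {a b c : ℕ} (h : a ^ 2 + b ^ 2 = c ^ 2)
    (hcop3 : ∀ d : ℕ, d ∣ a → d ∣ b → d ∣ c → d = 1) (hb : ¬ Even b) :
    ∀ v : ℕ, a = v ^ 2 →
      ∃ m k : ℕ, 0 < k ∧ (∀ d : ℕ, d ∣ 2 * m → d ∣ k → d = 1) ∧
        (m = 0 ↔ a = 0) ∧ (2 * m ^ 2) ^ 2 + (k ^ 2) ^ 2 = c := by
  intro v hv
  have hb2 : b % 2 = 1 := by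
    rcases Nat.even_or_odd b with h' | h'
    · exact absurd h' hb
    · exact Nat.odd_iff.mp h'
  have hcpos : 0 < c := by
    rcases Nat.eq_zero_or_pos c with h0 | h0
    · exfalso
      rw [h0] at h
      simp [pow_eq_zero_iff, add_eq_zero] at h
      omega
    · exact h0
  rcases Nat.eq_zero_or_pos a with ha0 | hapos
  · -- degenerate case a = 0 : then b = c and c = 1
    have hbc : b = c := by
      have : b ^ 2 = c ^ 2 := by rw [ha0] at h; simpa using h
      exact Nat.pow_left_injective (by norm_num) this
    have hc1 : c = 1 := hcop3 c (ha0 ▸ dvd_zero c) (hbc ▸ dvd_refl c) (dvd_refl c)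
    refine ⟨0, 1, one_pos, ?_, by simp [ha0], by simp [hc1]⟩
    intro d _ hd1
    exact Nat.dvd_one.mp hd1
  · -- main case: a > 0.  First a, b are coprime.
    have hab : Nat.Coprime a b := by
      have hg1 : Nat.gcd a b ∣ a := Nat.gcd_dvd_left a b
      have hg2 : Nat.gcd a b ∣ b := Nat.gcd_dvd_right a b
      have hg3 : Nat.gcd a b ∣ c := by
        rw [← Nat.pow_dvd_pow_iff (two_ne_zero), ← h]
        exact dvd_add (pow_dvd_pow_of_dvd hg1 2) (pow_dvd_pow_of_dvd hg2 2)
      exact hcop3 _ hg1 hg2 hg3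
    have hT : PythagoreanTriple (b : ℤ) (a : ℤ) (c : ℤ) := by
      have hN : b * b + a * a = c * c := by
        rw [← pow_two, ← pow_two, ← pow_two]; omega
      show (b : ℤ) * b + a * a = c * c
      exact_mod_cast congrArg (Nat.cast : ℕ → ℤ) hN
    have hgcd : Int.gcd (b : ℤ) (a : ℤ) = 1 := by
      rw [Int.gcd_natCast_natCast]; exact hab.symm
    obtain ⟨m, n, hb', ha', hc', hmn, hpar, hm0⟩ :=
      hT.coprime_classification' hgcd (by omega) (by exact_mod_cast hcpos)
    have h2mn : (0 : ℤ) < 2 * m * n := by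
      rw [← ha']; exact_mod_cast hapos
    have hmpos : 0 < m := by
      by_contra h'
      push_neg at h'
      have hm00 : m = 0 := le_antisymm h' hm0
      rw [hm00] at h2mn
      simp at h2mn
    have hnpos : 0 < n := by
      by_contra h'
      push_neg at h'
      nlinarith [mul_nonneg hm0 (neg_nonneg.mpr h')]
    lift m to ℕ using hm0 with M
    lift n to ℕ using hnpos.le with N
    have hMpos : 0 < M := by exact_mod_cast hmpos
    have hNpos : 0 < N := by exact_mod_cast hnpos
    have haN : a = 2 * M * N := by exact_mod_cast ha'
    have hcN : c = M ^ 2 + N ^ 2 := by exact_mod_cast hc'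
    have hcopMN : Nat.Coprime M N := by
      rw [Int.gcd_natCast_natCast] at hmn; exact hmn
    rcases hpar with ⟨hm2, hn2⟩ | ⟨hm2, hn2⟩
    · -- M even, N odd : apply key2 with roles swapped
      have hNodd : ¬ Even N := by
        have : N % 2 = 1 := by omega
        simp [Nat.even_iff, this]
      obtain ⟨m', k', hk', hco', hm', heq'⟩ :=
        key2 hNpos hMpos hcopMN.symm hNodd (v := v) (by rw [← hv, haN]; ring)
      exact ⟨m', k', hk', hco', by constructor <;> omega, by omega⟩
    · -- M odd, N even
      have hModd : ¬ Even M := by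
        have : M % 2 = 1 := by omega
        simp [Nat.even_iff, this]
      obtain ⟨m', k', hk', hco', hm', heq'⟩ :=
        key2 hMpos hNpos hcopMN hModd (v := v) (by rw [← hv, haN])
      exact ⟨m', k', hk', hco', by constructor <;> omega, by omega⟩

theorem frenicle_XXXVIII
    (x : Fin 2 → ℕ) (x2 : ℕ)
    (h : x 0 ^ 2 + x 1 ^ 2 = x2 ^ 2)
    (hcop : ∀ d : ℕ, d ∣ x 0 → d ∣ x 1 → d ∣ x2 → d = 1) :
    ∃ i : Fin 2, Even (x i) ∧ ¬ Even (x (1 - i)) ∧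
      ∀ v : ℕ, x i = v ^ 2 →
        ∃ (m k : ℕ), 0 < k ∧ (∀ d : ℕ, d ∣ 2 * m → d ∣ k → d = 1) ∧
          (m = 0 ↔ x i = 0) ∧ (2 * m ^ 2) ^ 2 + (k ^ 2) ^ 2 = x2 := by
  rcases Nat.even_or_odd (x 0) with h0 | h0 <;> rcases Nat.even_or_odd (x 1) with h1 | h1
  · -- both even : contradiction
    exfalso
    have hs : Even (x 0 ^ 2 + x 1 ^ 2) :=
      Even.add (Nat.even_pow.mpr ⟨h0, two_ne_zero⟩) (Nat.even_pow.mpr ⟨h1, two_ne_zero⟩)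
    rw [h] at hs
    have hx2 : Even x2 := (Nat.even_pow.mp hs).1
    obtain ⟨e0, he0⟩ := h0
    obtain ⟨e1, he1⟩ := h1
    obtain ⟨e2, he2⟩ := hx2
    have := hcop 2 ⟨e0, by omega⟩ ⟨e1, by omega⟩ ⟨e2, by omega⟩
    omega
  · -- x 0 even, x 1 odd : i = 0
    refine ⟨0, h0, ?_, ?_⟩
    · show ¬ Even (x (1 - 0))
      have h10 : (1 - 0 : Fin 2) = 1 := rfl
      rw [h10, Nat.even_iff]
      have := Nat.odd_iff.mp h1
      omega
    · exact key h hcop (by rw [Nat.even_iff]; have := Nat.odd_iff.mp h1; omega)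
  · -- x 0 odd, x 1 even : i = 1
    refine ⟨1, h1, ?_, ?_⟩
    · show ¬ Even (x (1 - 1))
      have h10 : (1 - 1 : Fin 2) = 0 := rfl
      rw [h10, Nat.even_iff]
      have := Nat.odd_iff.mp h0
      omega
    · exact key (by omega) (fun d hd1 hd0 hd2 => hcop d hd0 hd1 hd2)
        (by rw [Nat.even_iff]; have := Nat.odd_iff.mp h0; omega)
  · -- both odd : contradiction mod 4
    exfalso
    obtain ⟨a, ha⟩ := h0
    obtain ⟨b, hb⟩ := h1
    rcases Nat.even_or_odd x2 with h2 | h2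
    · obtain ⟨e, he⟩ := h2
      have e1 : x 0 ^ 2 = 4 * (a * a) + 4 * a + 1 := by rw [ha]; ring
      have e2 : x 1 ^ 2 = 4 * (b * b) + 4 * b + 1 := by rw [hb]; ring
      have e3 : x2 ^ 2 = 4 * (e * e) := by rw [he]; ring
      rw [e1, e2, e3] at h
      generalize a * a = A at h
      generalize b * b = B at h
      generalize e * e = E at h
      omega
    · obtain ⟨f, hf⟩ := h2
      have e1 : x 0 ^ 2 = 4 * (a * a) + 4 * a + 1 := by rw [ha]; ring
      have e2 : x 1 ^ 2 = 4 * (b * b) + 4 * b + 1 := by rw [hb]; ring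
      have e3 : x2 ^ 2 = 4 * (f * f) + 4 * f + 1 := by rw [hf]; ring
      rw [e1, e2, e3] at h
      generalize a * a = A at h
      generalize b * b = B at h
      generalize f * f = F at h
      omega
end

section
/- For natural numbers x₀, x₁, x₂ one has x₀² + 2·x₁² = x₂² if and only if there exist natural numbers a and b such that a ≥ b, x₀ = a − b, x₁² = 2·a·b, and x₂ = a + b. -/
/-!
Reducing `x₀² + 2x₁² = x₂²` modulo 2 shows that `x₀` and `x₂` have the same parity, and clearly
`x₀ ≤ x₂`; so `x₂ = x₀ + 2b`, and with `a = x₀ + b` the identity `(a - b)² + 4ab = (a + b)²`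
turns the equation into `x₁² = 2ab`. The same identity gives the converse.
-/

theorem Nat.sub_sq_add_four_mul_eq_add_sq {a b : ℕ} (h : b ≤ a) :
    (a - b) ^ 2 + 4 * a * b = (a + b) ^ 2 := by
  obtain ⟨c, rfl⟩ := Nat.exists_eq_add_of_le h
  rw [Nat.add_sub_cancel_left]
  ring

theorem Nat.le_and_even_sub_of_sq_add_two_mul_eq_sq {x y z : ℕ} (h : x ^ 2 + 2 * y = z ^ 2) :
    x ≤ z ∧ Even (z - x) := by
  have hle : x ≤ z := (Nat.pow_le_pow_iff_left two_ne_zero).mp (h ▸ Nat.le_add_right _ _)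
  refine ⟨hle, (Nat.even_sub hle).mpr ?_⟩
  rw [← Nat.even_pow' (n := 2) two_ne_zero, ← h, Nat.even_add, Nat.even_pow' two_ne_zero]
  simp only [even_two_mul, iff_true]

theorem roots_sq_add_two_sq
    (x0 x1 x2 : ℕ) :
    x0 ^ 2 + 2 * x1 ^ 2 = x2 ^ 2 ↔
      ∃ a b : ℕ, b ≤ a ∧ x0 = a - b ∧ x1 ^ 2 = 2 * a * b ∧ x2 = a + b := by
  constructor
  · intro h
    obtain ⟨hle, b, hb⟩ := Nat.le_and_even_sub_of_sq_add_two_mul_eq_sq h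
    have hx2 : x2 = x0 + b + b := by omega
    refine ⟨x0 + b, b, Nat.le_add_left b x0, (Nat.add_sub_cancel x0 b).symm, ?_, hx2⟩
    have key := Nat.sub_sq_add_four_mul_eq_add_sq (Nat.le_add_left b x0)
    rw [Nat.add_sub_cancel, ← hx2, ← h] at key
    linarith
  · rintro ⟨a, b, hba, rfl, hx1, rfl⟩
    rw [← Nat.sub_sq_add_four_mul_eq_add_sq hba, hx1]
    ring
end

section
/- If x₀, x₁, x₂ are natural numbers with x₀² + 2·x₁² = x₂² and x₀, x₁, x₂ are coprime, then there exist a natural number m and a positive natural number k such that 2·m and k are coprime, 2·m² ≠ k², x₀ = |2·m² − k²| (the absolute difference of 2·m² and k²), x₁ = 2·m·k, and x₂ = 2·m² + k². -/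
theorem coprime_roots_sq_add_two_sq
    (x0 x1 x2 : ℕ)
    (h : x0 ^ 2 + 2 * x1 ^ 2 = x2 ^ 2)
    (hcop : ∀ d : ℕ, d ∣ x0 → d ∣ x1 → d ∣ x2 → d = 1) :
    ∃ (m k : ℕ), 0 < k ∧ (∀ d : ℕ, d ∣ 2 * m → d ∣ k → d = 1) ∧
      2 * m ^ 2 ≠ k ^ 2 ∧ x0 = Nat.dist (2 * m ^ 2) (k ^ 2) ∧
      x1 = 2 * m * k ∧ x2 = 2 * m ^ 2 + k ^ 2 := by
  -- x0 is odd
  have hx0odd : ¬ 2 ∣ x0 := by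
    intro h2
    have h2sq : 4 ∣ x0 ^ 2 := by
      obtain ⟨c, rfl⟩ := h2; ring_nf; omega
    have h2x2 : 2 ∣ x2 := by
      have : 2 ∣ x2 ^ 2 := by omega
      exact Nat.Prime.dvd_of_dvd_pow Nat.prime_two this
    have h4x2 : 4 ∣ x2 ^ 2 := by
      obtain ⟨c, rfl⟩ := h2x2; ring_nf; omega
    have : 2 ∣ x1 ^ 2 := by omega
    have h2x1 : 2 ∣ x1 := Nat.Prime.dvd_of_dvd_pow Nat.prime_two this
    have := hcop 2 h2 h2x1 h2x2
    omega
  -- x2 ≥ x0 and both odd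
  have hx2ge : x0 ≤ x2 := by nlinarith [sq_nonneg x1]
  have hx2odd : ¬ 2 ∣ x2 := by
    intro h2
    have : 2 ∣ x2 ^ 2 := by obtain ⟨c, rfl⟩ := h2; ring_nf; omega
    have h2x0 : 2 ∣ x0 ^ 2 := by
      have : 2 ∣ 2 * x1 ^ 2 := ⟨x1 ^ 2, rfl⟩
      omega
    exact hx0odd (Nat.Prime.dvd_of_dvd_pow Nat.prime_two h2x0)
  -- write x2 = 2a + x0, set b = a + x0
  obtain ⟨a, ha⟩ : ∃ a, x2 = 2 * a + x0 := by
    refine ⟨(x2 - x0) / 2, ?_⟩; omega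
  set b := a + x0 with hb
  -- x1^2 = 2ab
  have key : x1 ^ 2 = 2 * (a * b) := by
    have h1 : (2 * a + x0) ^ 2 = 4 * (a * (a + x0)) + x0 ^ 2 := by ring
    rw [ha] at h; rw [hb]; omega
  -- x1 even
  have hx1even : 2 ∣ x1 := by
    have : 2 ∣ x1 ^ 2 := ⟨a * b, key⟩
    exact Nat.Prime.dvd_of_dvd_pow Nat.prime_two this
  obtain ⟨n, rfl⟩ := hx1even
  have keyn : 2 * n ^ 2 = a * b := by nlinarith
  -- coprimality of a and b
  have hab : Nat.Coprime a b := by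
    rw [Nat.coprime_iff_gcd_eq_one]
    by_contra hg
    have hg1 : 2 ≤ Nat.gcd a b := by
      rcases Nat.eq_zero_or_pos (Nat.gcd a b) with h0 | h0
      · have := Nat.eq_zero_of_gcd_eq_zero_right h0
        omega
      · omega
    set p := (Nat.gcd a b).minFac with hp
    have hpp : p.Prime := Nat.minFac_prime (by omega)
    have hpa : p ∣ a := dvd_trans (Nat.minFac_dvd _) (Nat.gcd_dvd_left _ _)
    have hpb : p ∣ b := dvd_trans (Nat.minFac_dvd _) (Nat.gcd_dvd_right _ _)
    have hpx0 : p ∣ x0 := by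
      have : x0 = b - a := by omega
      exact this ▸ Nat.dvd_sub hpb hpa
    have hpx2 : p ∣ x2 := by
      have : x2 = a + b := by omega
      exact this ▸ Nat.dvd_add hpa hpb
    have hpn : p ∣ 2 * n := by
      have : p ∣ (2 * n) ^ 2 := by
        rw [key]; exact Dvd.dvd.mul_left (hpa.mul_right b) 2
      exact Nat.Prime.dvd_of_dvd_pow hpp this
    have := hcop p hpx0 hpn hpx2
    exact hpp.one_lt.ne' this
  -- a + b is odd
  have habodd : ¬ 2 ∣ (a + b) := by
    intro h2
    apply hx2odd
    have : x2 = a + b := by omega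
    omega
  -- helper for squares
  have sqfac : ∀ u v : ℕ, Nat.Coprime u v → u * v = n ^ 2 →
      ∃ s t, u = s ^ 2 ∧ v = t ^ 2 := by
    intro u v huv heq
    obtain ⟨s, hs⟩ := exists_eq_pow_of_mul_eq_pow
      (show IsUnit (Nat.gcd u v) from Nat.isUnit_iff.mpr huv) heq
    obtain ⟨t, ht⟩ := exists_eq_pow_of_mul_eq_pow
      (show IsUnit (Nat.gcd v u) from Nat.isUnit_iff.mpr huv.symm)
      (by rw [mul_comm]; exact heq)
    exact ⟨s, t, hs, ht⟩
  rcases Nat.even_or_odd a with haeven | haodd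
  · -- a even: a = 2m², b = k²
    obtain ⟨a1, ha1⟩ := haeven
    have ha1' : a = 2 * a1 := by omega
    have hn2 : a1 * b = n ^ 2 := by nlinarith
    have ha1b : Nat.Coprime a1 b :=
      Nat.Coprime.coprime_dvd_left ⟨2, by omega⟩ hab
    obtain ⟨m, k, hm, hk⟩ := sqfac a1 b ha1b hn2
    have hkodd : ¬ 2 ∣ k := by
      intro h2
      apply habodd
      have : 2 ∣ k ^ 2 := by obtain ⟨c, rfl⟩ := h2; ring_nf; omega
      omega
    have hkpos : 0 < k := by
      rcases Nat.eq_zero_or_pos k with h0 | h0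
      · exfalso; apply hkodd; omega
      · exact h0
    have hneq : n = m * k := by
      have : n ^ 2 = (m * k) ^ 2 := by rw [mul_pow, ← hm, ← hk, hn2]
      exact Nat.pow_left_injective (by norm_num) this
    refine ⟨m, k, hkpos, ?_, ?_, ?_, by rw [hneq]; ring, by omega⟩
    · intro d hd2m hdk
      have hdodd : ¬ 2 ∣ d := fun h2 => hkodd (h2.trans hdk)
      have hdm : d ∣ m := Nat.Coprime.dvd_of_dvd_mul_left
        ((Nat.prime_two.coprime_iff_not_dvd.mpr hdodd).symm)
        hd2m
      have : d ∣ Nat.gcd a1 b :=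
        Nat.dvd_gcd (hm ▸ hdm.pow (n := 2) (by norm_num) : d ∣ a1)
          (hk ▸ hdk.pow (n := 2) (by norm_num) : d ∣ b)
      rw [ha1b.gcd_eq_one] at this
      exact Nat.eq_one_of_dvd_one this
    · intro heq
      apply hkodd
      have : 2 ∣ k ^ 2 := heq ▸ ⟨m ^ 2, rfl⟩
      exact Nat.Prime.dvd_of_dvd_pow Nat.prime_two this
    · -- x0 = b - a = k² - 2m²
      have hba : b = a + x0 := hb
      have : k ^ 2 = 2 * m ^ 2 + x0 := by omega
      rw [Nat.dist_eq_sub_of_le (by omega)]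
      omega
  · -- b even: a = k², b = 2m²
    have hbeven : 2 ∣ b := by
      rcases Nat.even_or_odd b with hb2 | hb2
      · exact hb2.two_dvd
      · exfalso; apply habodd; rw [Nat.odd_iff] at haodd hb2; omega
    obtain ⟨b1, hb1⟩ := hbeven
    have hn2 : a * b1 = n ^ 2 := by nlinarith
    have hab1 : Nat.Coprime a b1 :=
      Nat.Coprime.coprime_dvd_right ⟨2, by omega⟩ hab
    obtain ⟨k, m, hk, hm⟩ := sqfac a b1 hab1 hn2
    have hkodd : ¬ 2 ∣ k := by
      intro h2
      have : 2 ∣ k ^ 2 := by obtain ⟨c, rfl⟩ := h2; ring_nf; omega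
      rw [← hk] at this
      rw [Nat.odd_iff] at haodd; omega
    have hkpos : 0 < k := by
      rcases Nat.eq_zero_or_pos k with h0 | h0
      · exfalso; apply hkodd; omega
      · exact h0
    have hneq : n = m * k := by
      have : n ^ 2 = (m * k) ^ 2 := by
        rw [mul_pow, ← hm, ← hk]; rw [mul_comm] at hn2; exact hn2.symm
      exact Nat.pow_left_injective (by norm_num) this
    refine ⟨m, k, hkpos, ?_, ?_, ?_, by rw [hneq]; ring, by omega⟩
    · intro d hd2m hdk
      have hdodd : ¬ 2 ∣ d := fun h2 => hkodd (h2.trans hdk)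
      have hdm : d ∣ m := Nat.Coprime.dvd_of_dvd_mul_left
        ((Nat.prime_two.coprime_iff_not_dvd.mpr hdodd).symm)
        hd2m
      have : d ∣ Nat.gcd a b1 :=
        Nat.dvd_gcd (hk ▸ hdk.pow (n := 2) (by norm_num) : d ∣ a)
          (hm ▸ hdm.pow (n := 2) (by norm_num) : d ∣ b1)
      rw [hab1.gcd_eq_one] at this
      exact Nat.eq_one_of_dvd_one this
    · intro heq
      apply hkodd
      have : 2 ∣ k ^ 2 := heq ▸ ⟨m ^ 2, rfl⟩
      exact Nat.Prime.dvd_of_dvd_pow Nat.prime_two this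
    · -- x0 = b - a = 2m² - k²
      have : 2 * m ^ 2 = k ^ 2 + x0 := by omega
      rw [Nat.dist_eq_sub_of_le_right (by omega)]
      omega
end

section
/- Let x₀, x₁ be positive natural numbers and x₂, x₃ natural numbers such that x₀² + x₁² = x₂², x₀·x₁ = 2·x₃², and x₀ and x₁ are coprime. Then there exist coprime positive natural numbers g and h and natural numbers e and f with x₂ > e > f > 0 such that e² + f² = g² and e² − f² = h². -/
/-! Parametrize the primitive triple as (m² - n², 2mn, m² + n²) with m, n coprime of opposite
parity. The hypothesis on the area says that m n (m + n) (m - n) is a square; its four factors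
are pairwise coprime (the last two because m + n is odd), so m = e², n = f², m + n = g² and
m - n = h². Then e ≤ m < m² + n² = x₂. -/

theorem Nat.Coprime.exists_eq_pow_of_mul_eq_pow {a b c k : ℕ} (hab : a.Coprime b)
    (h : a * b = c ^ k) : ∃ u, a = u ^ k :=
  _root_.exists_eq_pow_of_mul_eq_pow (Nat.isUnit_iff.mpr hab) h

theorem Nat.Coprime.add_sub_of_odd_add {m n : ℕ} (hmn : m.Coprime n) (hnm : n ≤ m)
    (hodd : Odd (m + n)) : (m + n).Coprime (m - n) := by
  set g := Nat.gcd (m + n) (m - n)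
  have hgm : g ∣ 2 * m := by
    have := dvd_add (Nat.gcd_dvd_left (m + n) (m - n)) (Nat.gcd_dvd_right (m + n) (m - n))
    rwa [show m + n + (m - n) = 2 * m by omega] at this
  have hgn : g ∣ 2 * n := by
    have := Nat.dvd_sub (Nat.gcd_dvd_left (m + n) (m - n)) (Nat.gcd_dvd_right (m + n) (m - n))
    rwa [show m + n - (m - n) = 2 * n by omega] at this
  have hg2 : g ∣ 2 := by simpa [Nat.gcd_mul_left, hmn] using Nat.dvd_gcd hgm hgn
  have hg_odd : Odd g := hodd.of_dvd_nat (Nat.gcd_dvd_left _ _)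
  rcases (Nat.dvd_prime Nat.prime_two).mp hg2 with hg | hg
  · exact hg
  · exact absurd (hg ▸ hg_odd) (by decide)

theorem Nat.exists_sq_of_mul_add_mul_sub_eq_sq {m n k : ℕ} (hmn : m.Coprime n) (hnm : n ≤ m)
    (hodd : Odd (m + n)) (h : m * n * ((m + n) * (m - n)) = k ^ 2) :
    ∃ a b c d, m = a ^ 2 ∧ n = b ^ 2 ∧ m + n = c ^ 2 ∧ m - n = d ^ 2 := by
  have hm_add : m.Coprime (m + n) := by rw [add_comm, Nat.coprime_add_self_right]; exact hmn
  have hn_add : n.Coprime (m + n) := Nat.coprime_add_self_right.mpr hmn.symm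
  have hm_sub : m.Coprime (m - n) := (Nat.coprime_self_sub_right hnm).mpr hmn
  have hn_sub : n.Coprime (m - n) := by
    rw [Nat.coprime_comm, Nat.coprime_sub_self_left hnm]; exact hmn
  have hsplit : (m * n).Coprime ((m + n) * (m - n)) :=
    (hm_add.mul_right hm_sub).mul_left (hn_add.mul_right hn_sub)
  obtain ⟨u, hu⟩ := hsplit.exists_eq_pow_of_mul_eq_pow h
  obtain ⟨v, hv⟩ := hsplit.symm.exists_eq_pow_of_mul_eq_pow ((mul_comm _ _).trans h)
  have hadd_sub := hmn.add_sub_of_odd_add hnm hodd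
  obtain ⟨a, ha⟩ := hmn.exists_eq_pow_of_mul_eq_pow hu
  obtain ⟨b, hb⟩ := hmn.symm.exists_eq_pow_of_mul_eq_pow ((mul_comm _ _).trans hu)
  obtain ⟨c, hc⟩ := hadd_sub.exists_eq_pow_of_mul_eq_pow hv
  obtain ⟨d, hd⟩ := hadd_sub.symm.exists_eq_pow_of_mul_eq_pow ((mul_comm _ _).trans hv)
  exact ⟨a, b, c, d, ha, hb, hc, hd⟩

theorem Nat.coprime_pythagorean_classification {x y z : ℕ} (h : x ^ 2 + y ^ 2 = z ^ 2)
    (hxy : x.Coprime y) :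
    ∃ m n : ℕ, m.Coprime n ∧ Odd (m + n) ∧ z = m ^ 2 + n ^ 2 ∧
      (x + n ^ 2 = m ^ 2 ∧ y = 2 * m * n ∨ x = 2 * m * n ∧ y + n ^ 2 = m ^ 2) := by
  have htriple : PythagoreanTriple (x : ℤ) y z := by
    have hz : (x : ℤ) ^ 2 + y ^ 2 = z ^ 2 := by exact_mod_cast h
    unfold PythagoreanTriple; linear_combination hz
  obtain ⟨m, n, hxy', hz, hmn, hpar⟩ :=
    PythagoreanTriple.coprime_classification.mp ⟨htriple, hxy⟩
  refine ⟨m.natAbs, n.natAbs, hmn, ?_, ?_, ?_⟩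
  · rw [Nat.odd_add, Int.natAbs_odd, Int.natAbs_even, Int.odd_iff, Int.even_iff]; omega
  · zify; simp only [sq_abs]; rcases hz with hz | hz <;> nlinarith [sq_nonneg m, sq_nonneg n]
  · rcases hxy' with ⟨hx, hy⟩ | ⟨hx, hy⟩
    · refine .inl ⟨?_, ?_⟩
      · zify; simp only [sq_abs]; linarith
      · simpa [Int.natAbs_mul, mul_assoc] using congrArg Int.natAbs hy
    · refine .inr ⟨?_, ?_⟩
      · simpa [Int.natAbs_mul, mul_assoc] using congrArg Int.natAbs hx
      · zify; simp only [sq_abs]; linarith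

theorem fermat_claim_II
    (x0 x1 x2 x3 : ℕ) (hx0 : 0 < x0) (hx1 : 0 < x1)
    (h1 : x0 ^ 2 + x1 ^ 2 = x2 ^ 2) (h2 : x0 * x1 = 2 * x3 ^ 2)
    (hcop : ∀ d : ℕ, d ∣ x0 → d ∣ x1 → d = 1) :
    ∃ g h e f : ℕ, 0 < g ∧ 0 < h ∧ (∀ d : ℕ, d ∣ g → d ∣ h → d = 1) ∧
      e < x2 ∧ f < e ∧ 0 < f ∧
      e ^ 2 + f ^ 2 = g ^ 2 ∧ e ^ 2 - f ^ 2 = h ^ 2 := by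
  obtain ⟨m, n, hmn, hodd, rfl, hparam⟩ := Nat.coprime_pythagorean_classification h1
    (hcop _ (Nat.gcd_dvd_left _ _) (Nat.gcd_dvd_right _ _))
  have hprod : x0 * x1 = 2 * m * n * (m ^ 2 - n ^ 2) := by
    rcases hparam with ⟨hx, rfl⟩ | ⟨rfl, hy⟩
    · rw [show x0 = m ^ 2 - n ^ 2 by omega]; ring
    · rw [show x1 = m ^ 2 - n ^ 2 by omega]
  obtain ⟨hmn0, hsub⟩ := CanonicallyOrderedAdd.mul_pos.mp (hprod ▸ Nat.mul_pos hx0 hx1)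
  have hn : 0 < n := Nat.pos_of_mul_pos_left hmn0
  have hnm : n < m := lt_of_pow_lt_pow_left₀ 2 (Nat.zero_le m) (Nat.sub_pos_iff_lt.mp hsub)
  have harea : m * n * ((m + n) * (m - n)) = x3 ^ 2 := by
    refine Nat.eq_of_mul_eq_mul_left two_pos ?_
    rw [← h2, hprod, Nat.sq_sub_sq]; ring
  have hcd : (m + n).Coprime (m - n) := hmn.add_sub_of_odd_add hnm.le hodd
  obtain ⟨a, b, c, d, rfl, rfl, hc, hd⟩ :=
    Nat.exists_sq_of_mul_add_mul_sub_eq_sq hmn hnm.le hodd harea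
  rw [hc, hd, Nat.coprime_pow_left_iff two_pos, Nat.coprime_pow_right_iff two_pos] at hcd
  refine ⟨c, d, a, b, (pow_pos_iff two_ne_zero).mp (hc ▸ Nat.add_pos_right _ hn),
    (pow_pos_iff two_ne_zero).mp (hd ▸ Nat.sub_pos_of_lt hnm),
    fun k hkc hkd => Nat.eq_one_of_dvd_one (hcd ▸ Nat.dvd_gcd hkc hkd), ?_,
    lt_of_pow_lt_pow_left₀ 2 (Nat.zero_le a) hnm, (pow_pos_iff two_ne_zero).mp hn, hc, hd⟩
  calc a ≤ a ^ 2 := Nat.le_self_pow two_ne_zero a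
    _ ≤ (a ^ 2) ^ 2 := Nat.le_self_pow two_ne_zero _
    _ < (a ^ 2) ^ 2 + (b ^ 2) ^ 2 := Nat.lt_add_of_pos_right (pow_pos hn 2)
end

section
/- Let e, f, g, h be natural numbers such that g and h are positive and coprime, e > f > 0, e² + f² = g², and e² − f² = h². Then there exist positive natural numbers m and k such that 2·m and k are coprime, f = 2·m·k, and (2·m²)² + (k²)² = e². (In particular, setting y₀ = 2·m², y₁ = k², y₂ = e, y₃ = m·k, one obtains a Pythagorean triple y₀² + y₁² = y₂² with y₀·y₁ = 2·y₃² and hypotenuse y₂ = e.) -/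
lemma aux_sq_split (w u t e : ℕ) (hw : 0 < w) (hu : 0 < u) (hcop : Nat.Coprime w u)
    (huodd : u % 2 = 1)
    (ht : t ^ 2 = w * u) (he : (2 * w) ^ 2 + u ^ 2 = e ^ 2) :
    ∃ m k : ℕ, 0 < m ∧ 0 < k ∧ (∀ d : ℕ, d ∣ 2 * m → d ∣ k → d = 1) ∧
      2 * t = 2 * m * k ∧ (2 * m ^ 2) ^ 2 + (k ^ 2) ^ 2 = e ^ 2 := by
  have hwunit : IsUnit (GCDMonoid.gcd w u) := by
    rw [Nat.isUnit_iff]; exact hcop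
  obtain ⟨m, hm⟩ : ∃ m, w = m ^ 2 :=
    exists_eq_pow_of_mul_eq_pow hwunit ht.symm
  obtain ⟨k, hk⟩ : ∃ k, u = k ^ 2 := by
    refine exists_eq_pow_of_mul_eq_pow (a := u) (b := w) ?_ (by rw [mul_comm]; exact ht.symm)
    rw [Nat.isUnit_iff]; exact hcop.symm
  have hm0 : 0 < m := by
    rcases Nat.eq_zero_or_pos m with h' | h'
    · subst h'; simp at hm; omega
    · exact h'
  have hk0 : 0 < k := by
    rcases Nat.eq_zero_or_pos k with h' | h'
    · subst h'; simp at hk; omega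
    · exact h'
  have htmk : t = m * k := by
    have : t ^ 2 = (m * k) ^ 2 := by rw [ht, hm, hk]; ring
    exact Nat.pow_left_injective (by norm_num) this
  refine ⟨m, k, hm0, hk0, ?_, by rw [htmk]; ring, ?_⟩
  · intro d hd1 hd2
    have hku : d ∣ u := hk ▸ (dvd_pow hd2 (by norm_num))
    have hdodd : d % 2 = 1 := by
      rcases Nat.mod_two_eq_zero_or_one d with h' | h'
      · exfalso
        obtain ⟨c, hc⟩ := dvd_trans (Nat.dvd_of_mod_eq_zero h') hku
        omega
      · exact h'
    have hdm : d ∣ m := by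
      have hc2 : Nat.Coprime d 2 := by
        rw [Nat.coprime_two_right, Nat.odd_iff]; exact hdodd
      exact Nat.Coprime.dvd_of_dvd_mul_left hc2 hd1
    have hdw : d ∣ w := hm ▸ (dvd_pow hdm (by norm_num))
    have hd1' : d ∣ 1 := by
      have := Nat.dvd_gcd hdw hku
      rwa [Nat.Coprime.gcd_eq_one hcop] at this
    exact Nat.eq_one_of_dvd_one hd1'
  · rw [← he, hm, hk] <;> ring

theorem fermat_descent_step
    (e f g h : ℕ) (hg : 0 < g) (hh : 0 < h)
    (hcop : ∀ d : ℕ, d ∣ g → d ∣ h → d = 1)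
    (hef : f < e) (hf : 0 < f)
    (h1 : e ^ 2 + f ^ 2 = g ^ 2) (h2 : e ^ 2 - f ^ 2 = h ^ 2) :
    ∃ m k : ℕ, 0 < m ∧ 0 < k ∧ (∀ d : ℕ, d ∣ 2 * m → d ∣ k → d = 1) ∧
      f = 2 * m * k ∧ (2 * m ^ 2) ^ 2 + (k ^ 2) ^ 2 = e ^ 2 := by
  have hfe2 : f ^ 2 < e ^ 2 := Nat.pow_lt_pow_left hef (by norm_num)
  have hfe : f ^ 2 + h ^ 2 = e ^ 2 := by omega
  have hg2 : g ^ 2 = h ^ 2 + 2 * f ^ 2 := by omega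
  have hgp : g ^ 2 % 2 = g % 2 := by
    rcases Nat.mod_two_eq_zero_or_one g with h' | h' <;> simp [Nat.pow_mod, h']
  have hhp : h ^ 2 % 2 = h % 2 := by
    rcases Nat.mod_two_eq_zero_or_one h with h' | h' <;> simp [Nat.pow_mod, h']
  have hodd : g % 2 = 1 ∧ h % 2 = 1 := by
    rcases Nat.mod_two_eq_zero_or_one g with h' | h'
    · exfalso
      have h2g : (2 : ℕ) ∣ g := Nat.dvd_of_mod_eq_zero h'
      have h2h : (2 : ℕ) ∣ h := Nat.dvd_of_mod_eq_zero (by omega)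
      have := hcop 2 h2g h2h
      omega
    · exact ⟨h', by omega⟩
  have hgh : h < g := by
    by_contra h'
    have : g ^ 2 ≤ h ^ 2 := Nat.pow_le_pow_left (by omega) 2
    have : 0 < f ^ 2 := by positivity
    omega
  obtain ⟨v, hv⟩ : ∃ v, g = h + 2 * v := ⟨(g - h) / 2, by omega⟩
  subst hv
  have hv0 : 0 < v := by
    rcases Nat.eq_zero_or_pos v with h' | h' <;> omega
  -- key identities
  have hfuv : f ^ 2 = 2 * ((h + v) * v) := by ring_nf; ring_nf at hg2; omega
  have heuv : (h + v) ^ 2 + v ^ 2 = e ^ 2 := by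
    ring_nf; ring_nf at hfe hfuv; omega
  -- coprimality of h+v and v
  have hcopuv : Nat.Coprime (h + v) v := by
    have hd := Nat.gcd_dvd_left (h + v) v
    have hd' := Nat.gcd_dvd_right (h + v) v
    have hdh : Nat.gcd (h + v) v ∣ h := by
      have := Nat.dvd_sub hd hd'
      simpa using this
    have hdg : Nat.gcd (h + v) v ∣ h + 2 * v :=
      Dvd.dvd.add hdh (Dvd.dvd.mul_left hd' 2)
    exact hcop _ hdg hdh
  -- f is even
  obtain ⟨t, htf⟩ : ∃ t, f = 2 * t := by
    have hfp : f ^ 2 % 2 = f % 2 := by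
      rcases Nat.mod_two_eq_zero_or_one f with h'' | h'' <;> simp [Nat.pow_mod, h'']
    have hpar : (2 * ((h + v) * v)) % 2 = 0 := by omega
    exact ⟨f / 2, by omega⟩
  subst htf
  have ht2 : 2 * t ^ 2 = (h + v) * v := by ring_nf; ring_nf at hfuv; omega
  rcases Nat.mod_two_eq_zero_or_one v with hvpar | hvpar
  · -- v even, h+v odd
    obtain ⟨w, hw⟩ : ∃ w, v = 2 * w := ⟨v / 2, by omega⟩
    subst hw
    have hw0 : 0 < w := by omega
    have htwu : t ^ 2 = w * (h + 2 * w) := by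
      have e1 : (h + 2 * w) * (2 * w) = 2 * (w * (h + 2 * w)) := by ring
      rw [e1] at ht2; omega
    have hcopwu : Nat.Coprime w (h + 2 * w) := by
      exact Nat.Coprime.coprime_dvd_left (dvd_mul_left w 2) hcopuv.symm
    have huodd : (h + 2 * w) % 2 = 1 := by omega
    have he' : (2 * w) ^ 2 + (h + 2 * w) ^ 2 = e ^ 2 := by omega
    obtain ⟨m, k, hm, hk, hc, hft, hsq⟩ :=
      aux_sq_split w (h + 2 * w) t e hw0 (by omega) hcopwu huodd htwu he'
    exact ⟨m, k, hm, hk, hc, by omega, hsq⟩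
  · -- h+v even, v odd
    obtain ⟨w, hw⟩ : ∃ w, h + v = 2 * w := ⟨(h + v) / 2, by omega⟩
    have hw0 : 0 < w := by omega
    have htwv : t ^ 2 = w * v := by
      have e1 : 2 * t ^ 2 = 2 * w * v := by rw [← hw]; exact ht2
      have e2 : 2 * w * v = 2 * (w * v) := by ring
      omega
    have hcopwv : Nat.Coprime w v := by
      rw [hw] at hcopuv
      exact Nat.Coprime.coprime_dvd_left (dvd_mul_left w 2) hcopuv
    have he' : (2 * w) ^ 2 + v ^ 2 = e ^ 2 := by
      rw [← hw]; exact heuv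
    obtain ⟨m, k, hm, hk, hc, hft, hsq⟩ :=
      aux_sq_split w v t e hw0 hv0 hcopwv hvpar htwv he'
    exact ⟨m, k, hm, hk, hc, by omega, hsq⟩
end
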